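/- Let Ψ be a smooth function on ℝ^d with support contained in [−1, 1]^d, and let q be a positive integer. There exists a constant A = A(Ψ, q) such that for every positive integer s, every family of complex coefficients (α_j) indexed by j = (j₁, ..., j_d) ∈ ℤ^d with |j_l| ≤ 2^s for all l, and every m ∈ {1, ..., d}, the function R(x) = Σ_j α_j Ψ_{j,s}(x) satisfies ‖∂_m^q R‖₂² ≤ A Σ_j |α_j|², where ∂_m denotes the partial derivative with respect to x_m. -/

import Mathlib

open MeasureTheory Filter Real
open scoped ENNReal FourierTransform ComplexConjugate

noncomputable section

/-- `g` is (a representative of) the `L²` Fourier transform of `f`: both are in `L²` and `g` is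
the `L²`-limit of the Fourier integrals of `L¹ ∩ L²` approximations of `f`. -/
def IsL2FourierPair {d : ℕ} (f g : EuclideanSpace ℝ (Fin d) → ℂ) : Prop :=
  MemLp f 2 (volume : Measure (EuclideanSpace ℝ (Fin d))) ∧
  MemLp g 2 (volume : Measure (EuclideanSpace ℝ (Fin d))) ∧
  ∃ u : ℕ → EuclideanSpace ℝ (Fin d) → ℂ,
    (∀ k, Integrable (u k) (volume : Measure (EuclideanSpace ℝ (Fin d)))) ∧
    (∀ k, MemLp (u k) 2 (volume : Measure (EuclideanSpace ℝ (Fin d)))) ∧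
    Tendsto (fun k => eLpNorm (u k - f) 2 volume) atTop (nhds 0) ∧
    Tendsto (fun k => eLpNorm (𝓕 (u k) - g) 2 volume) atTop (nhds 0)

/-- `τ_p^p(f) = ∫ |x|^p |f x|² dx`, with values in `[0, ∞]`. -/
def tauPow {d : ℕ} (p : ℝ) (f : EuclideanSpace ℝ (Fin d) → ℂ) : ℝ≥0∞ :=
  ∫⁻ x, (‖x‖₊ : ℝ≥0∞) ^ p * (‖f x‖₊ : ℝ≥0∞) ^ 2

/-- `τ_p(f) = (τ_p^p(f))^(1/p)`. -/
def tau {d : ℕ} (p : ℝ) (f : EuclideanSpace ℝ (Fin d) → ℂ) : ℝ≥0∞ :=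
  tauPow p f ^ (1 / p)

/-- `∫ |x - a|^p |f x|² dx`, with values in `[0, ∞]`. -/
def momAbout {d : ℕ} (p : ℝ) (a : EuclideanSpace ℝ (Fin d))
    (f : EuclideanSpace ℝ (Fin d) → ℂ) : ℝ≥0∞ :=
  ∫⁻ x, (‖x - a‖₊ : ℝ≥0∞) ^ p * (‖f x‖₊ : ℝ≥0∞) ^ 2

/-- `Ψ_{j,s}(x) = 2^{-ds/2} e^{2πi j·(2^{-s}x)} Ψ(2^{-s}x)`. -/
def PsiJS {d : ℕ} (Ψ : EuclideanSpace ℝ (Fin d) → ℂ) (j : Fin d → ℤ) (s : ℕ)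
    (x : EuclideanSpace ℝ (Fin d)) : ℂ :=
  (((2 : ℝ) ^ (-((d : ℝ) * (s : ℝ)) / 2) : ℝ) : ℂ) *
    Complex.exp (2 * (π : ℂ) * Complex.I *
      ∑ l, (j l : ℂ) * (((2 : ℝ) ^ (-(s : ℝ)) * x l : ℝ) : ℂ)) *
    Ψ ((2 : ℝ) ^ (-(s : ℝ)) • x)

/-- The partial derivative `∂_m f` of a function on `ℝ^d`. -/
def pderiv' {d : ℕ} (m : Fin d) (f : EuclideanSpace ℝ (Fin d) → ℂ) :
    EuclideanSpace ℝ (Fin d) → ℂ :=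
  fun x => fderiv ℝ f x (EuclideanSpace.single m 1)

namespace Lemma5Aux

variable {d : ℕ}

abbrev E' (d : ℕ) := EuclideanSpace ℝ (Fin d)

def Cube (d : ℕ) : Set (E' d) := {x | ∀ i, |x i| ≤ 1}

lemma isClosed_cube : IsClosed (Cube d) := by
  have : Cube d = ⋂ i, (fun x : E' d => x i) ⁻¹' (Set.Icc (-1) 1) := by
    ext x; simp [Cube, abs_le, Set.mem_iInter]
  rw [this]
  exact isClosed_iInter fun i =>
    isClosed_Icc.preimage (EuclideanSpace.proj (𝕜 := ℝ) i).continuous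

lemma isCompact_cube : IsCompact (Cube d) := by
  refine (isCompact_closedBall (0 : E' d) (Real.sqrt d)).of_isClosed_subset isClosed_cube ?_
  intro x hx
  simp only [Metric.mem_closedBall, dist_zero_right]
  rw [EuclideanSpace.norm_eq]
  have h1 : ∑ i : Fin d, ‖x i‖ ^ 2 ≤ (d : ℝ) := by
    calc ∑ i : Fin d, ‖x i‖ ^ 2 ≤ ∑ _i : Fin d, (1:ℝ) := by
          refine Finset.sum_le_sum fun i _ => ?_
          have := hx i
          rw [Real.norm_eq_abs]; nlinarith [abs_nonneg (x i)]
      _ = d := by simp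
  exact Real.sqrt_le_sqrt h1

lemma contDiff_pderiv' (m : Fin d) {f : E' d → ℂ} (hf : ContDiff ℝ (⊤ : ℕ∞) f) :
    ContDiff ℝ (⊤ : ℕ∞) (pderiv' m f) :=
  (hf.fderiv_right (by simp)).clm_apply contDiff_const

lemma contDiff_iter (m : Fin d) (k : ℕ) {f : E' d → ℂ} (hf : ContDiff ℝ (⊤ : ℕ∞) f) :
    ContDiff ℝ (⊤ : ℕ∞) ((pderiv' m)^[k] f) := by
  induction k with
  | zero => simpa using hf
  | succ k ih => rw [Function.iterate_succ_apply']; exact contDiff_pderiv' m ih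

lemma support_pderiv'_subset (m : Fin d) (f : E' d → ℂ) :
    Function.support (pderiv' m f) ⊆ tsupport f := by
  intro x hx
  by_contra hx'
  apply hx
  have h0 : f =ᶠ[nhds x] (fun _ => (0:ℂ)) := notMem_tsupport_iff_eventuallyEq.mp hx'
  have : fderiv ℝ f x = fderiv ℝ (fun _ => (0:ℂ)) x := h0.fderiv_eq
  simp [pderiv', this]

lemma tsupport_iter_subset (m : Fin d) (k : ℕ) {f : E' d → ℂ}
    (hf : Function.support f ⊆ Cube d) :
    Function.support ((pderiv' m)^[k] f) ⊆ Cube d := by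
  induction k with
  | zero => simpa using hf
  | succ k ih =>
      rw [Function.iterate_succ_apply']
      refine (support_pderiv'_subset m _).trans ?_
      exact closure_minimal ih isClosed_cube


def phiC (j : Fin d → ℤ) : E' d →L[ℝ] ℂ :=
  ∑ l, (2*(π:ℂ)*Complex.I*(j l : ℂ)) •
    ((Complex.ofRealCLM : ℝ →L[ℝ] ℂ).comp (EuclideanSpace.proj l))

lemma phiC_apply (j : Fin d → ℤ) (y : E' d) :
    phiC j y = ∑ l, 2*(π:ℂ)*Complex.I*(j l : ℂ)*((y l : ℝ) : ℂ) := by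
  simp [phiC, smul_eq_mul]

lemma phiC_single (j : Fin d → ℤ) (m : Fin d) :
    phiC j (EuclideanSpace.single m 1) = 2*(π:ℂ)*Complex.I*(j m : ℂ) := by
  rw [phiC_apply]
  rw [Finset.sum_eq_single m]
  · simp
  · intro l _ hl
    simp [EuclideanSpace.single_apply, hl]
  · simp

lemma continuous_expPhi (j : Fin d → ℤ) : Continuous fun y : E' d => Complex.exp (phiC j y) :=
  Complex.continuous_exp.comp (phiC j).continuous

/-- `G_{j,k}(x) = e^{φ_j(ax)} (∂_m^k Ψ)(ax)`. -/
def GG (Ψ : E' d → ℂ) (m : Fin d) (a : ℝ) (j : Fin d → ℤ) (k : ℕ) : E' d → ℂ :=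
  fun x => Complex.exp (phiC j (a • x)) * ((pderiv' m)^[k] Ψ) (a • x)

lemma contDiff_scale (a : ℝ) : ContDiff ℝ (⊤ : ℕ∞) (fun x : E' d => a • x) :=
  contDiff_id.const_smul a

lemma contDiff_GG (Ψ : E' d → ℂ) (hΨ : ContDiff ℝ (⊤ : ℕ∞) Ψ) (m : Fin d) (a : ℝ)
    (j : Fin d → ℤ) (k : ℕ) : ContDiff ℝ (⊤ : ℕ∞) (GG Ψ m a j k) := by
  refine ContDiff.mul ?_ ?_
  · exact ((phiC j).contDiff.comp (contDiff_scale a)).cexp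
  · exact (contDiff_iter m k hΨ).comp (contDiff_scale a)

def DGG (Ψ : E' d → ℂ) (m : Fin d) (a : ℝ) (j : Fin d → ℤ) (k : ℕ) (x : E' d) :
    E' d →L[ℝ] ℂ :=
  Complex.exp (phiC j (a • x)) •
      ((fderiv ℝ ((pderiv' m)^[k] Ψ) (a • x)).comp (a • ContinuousLinearMap.id ℝ (E' d)))
    + ((pderiv' m)^[k] Ψ) (a • x) •
      (Complex.exp (phiC j (a • x)) • ((phiC j).comp (a • ContinuousLinearMap.id ℝ (E' d))))

lemma hasFDerivAt_GG (Ψ : E' d → ℂ) (hΨ : ContDiff ℝ (⊤ : ℕ∞) Ψ) (m : Fin d) (a : ℝ)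
    (j : Fin d → ℤ) (k : ℕ) (x : E' d) :
    HasFDerivAt (GG Ψ m a j k) (DGG Ψ m a j k x) x := by
  have hσ : HasFDerivAt (fun x : E' d => a • x) (a • ContinuousLinearMap.id ℝ (E' d)) x := by
    exact (hasFDerivAt_id x).const_smul a
  have h1 : HasFDerivAt (fun x : E' d => Complex.exp (phiC j (a • x)))
      (Complex.exp (phiC j (a • x)) • ((phiC j).comp (a • ContinuousLinearMap.id ℝ (E' d)))) x := by
    have := (((phiC j).comp (a • ContinuousLinearMap.id ℝ (E' d))).hasFDerivAt (x := x)).cexp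
    simpa using this
  have h2 : HasFDerivAt (fun x : E' d => ((pderiv' m)^[k] Ψ) (a • x))
      ((fderiv ℝ ((pderiv' m)^[k] Ψ) (a • x)).comp (a • ContinuousLinearMap.id ℝ (E' d))) x := by
    have hdk : HasFDerivAt ((pderiv' m)^[k] Ψ) (fderiv ℝ ((pderiv' m)^[k] Ψ) (a • x)) (a • x) :=
      (((contDiff_iter m k hΨ).differentiable (by simp)) (a • x)).hasFDerivAt
    exact hdk.comp x hσ
  exact h1.mul h2

lemma DGG_single (Ψ : E' d → ℂ) (hΨ : ContDiff ℝ (⊤ : ℕ∞) Ψ) (m : Fin d) (a : ℝ)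
    (j : Fin d → ℤ) (k : ℕ) (x : E' d) :
    DGG Ψ m a j k x (EuclideanSpace.single m 1)
      = (2*(π:ℂ)*Complex.I*(j m : ℂ)*(a:ℂ)) * GG Ψ m a j k x + (a:ℂ) * GG Ψ m a j (k+1) x := by
  have h1 : (a • ContinuousLinearMap.id ℝ (E' d)) (EuclideanSpace.single m 1)
      = a • EuclideanSpace.single m 1 := by simp
  have h2 : fderiv ℝ ((pderiv' m)^[k] Ψ) (a • x) (a • EuclideanSpace.single m 1)
      = (a:ℂ) * ((pderiv' m)^[k+1] Ψ) (a • x) := by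
    rw [ContinuousLinearMap.map_smul, Function.iterate_succ_apply']
    rw [show ((pderiv' m) ((pderiv' m)^[k] Ψ)) (a • x)
      = fderiv ℝ ((pderiv' m)^[k] Ψ) (a • x) (EuclideanSpace.single m 1) from rfl]
    rw [Complex.real_smul]
  have h3 : phiC j (a • EuclideanSpace.single m 1) = (a:ℂ) * (2*(π:ℂ)*Complex.I*(j m : ℂ)) := by
    rw [ContinuousLinearMap.map_smul, phiC_single, Complex.real_smul]
  simp only [DGG, ContinuousLinearMap.add_apply, ContinuousLinearMap.smul_apply,
    ContinuousLinearMap.comp_apply, h1, h2, h3, GG, smul_eq_mul]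
  push_cast
  ring

lemma pderiv'_GG (Ψ : E' d → ℂ) (hΨ : ContDiff ℝ (⊤ : ℕ∞) Ψ) (m : Fin d) (a : ℝ)
    (j : Fin d → ℤ) (k : ℕ) (x : E' d) :
    pderiv' m (GG Ψ m a j k) x
      = (2*(π:ℂ)*Complex.I*(j m : ℂ)*(a:ℂ)) * GG Ψ m a j k x + (a:ℂ) * GG Ψ m a j (k+1) x := by
  rw [pderiv', (hasFDerivAt_GG Ψ hΨ m a j k x).fderiv, DGG_single Ψ hΨ m a j k x]


lemma oneD (n : ℤ) :
    ∫ t : ℝ, (Set.Icc (-1:ℝ) 1).indicator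
        (fun t : ℝ => Complex.exp (2*(π:ℂ)*Complex.I*(n:ℂ)*(t:ℂ))) t
      = if n = 0 then 2 else 0 := by
  rw [integral_indicator measurableSet_Icc, MeasureTheory.integral_Icc_eq_integral_Ioc,
    ← intervalIntegral.integral_of_le (by norm_num : (-1:ℝ) ≤ 1)]
  by_cases hn : n = 0
  · simp [hn]
    norm_num
  · rw [if_neg hn]
    rw [integral_exp_mul_complex (by simp [Real.pi_ne_zero, hn] : (2*(π:ℂ)*Complex.I*(n:ℂ)) ≠ 0)]
    have h1 : (2*(π:ℂ)*Complex.I*(n:ℂ)) * ((1:ℝ):ℂ) = (n:ℂ) * (2*(π:ℂ)*Complex.I) := by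
      push_cast; ring
    have h2 : (2*(π:ℂ)*Complex.I*(n:ℂ)) * ((-1:ℝ):ℂ) = ((-n:ℤ):ℂ) * (2*(π:ℂ)*Complex.I) := by
      push_cast; ring
    rw [h1, h2, Complex.exp_int_mul_two_pi_mul_I, Complex.exp_int_mul_two_pi_mul_I]
    simp

lemma indicator_pi_prod (t : Fin d → Set ℝ) (g : Fin d → ℝ → ℂ) :
    (Set.univ.pi t).indicator (fun x : Fin d → ℝ => ∏ l, g l (x l)) =
      fun x => ∏ l, (t l).indicator (g l) (x l) := by
  funext x
  by_cases hx : x ∈ Set.univ.pi t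
  · rw [Set.indicator_of_mem hx]
    exact (Finset.prod_congr rfl fun l _ => (Set.indicator_of_mem (hx l trivial) _).symm)
  · rw [Set.indicator_of_notMem hx]
    have h' : ¬ ∀ l, x l ∈ t l := by simpa [Set.mem_pi] using hx
    obtain ⟨l, hl⟩ := not_forall.mp h'
    exact (Finset.prod_eq_zero (Finset.mem_univ l) (Set.indicator_of_notMem hl _)).symm

lemma cube_preimage :
    (MeasurableEquiv.toLp 2 (Fin d → ℝ)) ⁻¹' (Cube d)
      = Set.univ.pi (fun _ : Fin d => Set.Icc (-1:ℝ) 1) := by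
  ext x
  simp [MeasurableEquiv.coe_toLp, Cube, abs_le, Set.mem_pi, forall_and, Pi.le_def]

/-- The basic orthogonality integral over the cube. -/
lemma cubeIntegral (n : Fin d → ℤ) :
    ∫ y in Cube d, Complex.exp (∑ l, 2*(π:ℂ)*Complex.I*(n l : ℂ)*((y l : ℝ):ℂ))
      = ∏ l, (if n l = 0 then (2:ℂ) else 0) := by
  rw [← ((EuclideanSpace.volume_preserving_symm_measurableEquiv_toLp (Fin d)).symm).setIntegral_preimage_emb
    (MeasurableEquiv.measurableEmbedding _)
    (fun y => Complex.exp (∑ l, 2*(π:ℂ)*Complex.I*(n l : ℂ)*((y l : ℝ):ℂ))) (Cube d)]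
  rw [MeasurableEquiv.symm_symm, cube_preimage]
  have hcoord : ∀ (x : Fin d → ℝ) (l : Fin d),
      (((MeasurableEquiv.toLp 2 (Fin d → ℝ)) x) l : ℝ) = x l := by
    intro x l; simp [MeasurableEquiv.coe_toLp]
  have hfun : ∀ x : Fin d → ℝ,
      Complex.exp (∑ l, 2*(π:ℂ)*Complex.I*(n l : ℂ)*((((MeasurableEquiv.toLp 2 (Fin d → ℝ)) x) l : ℝ):ℂ))
        = ∏ l, Complex.exp (2*(π:ℂ)*Complex.I*(n l : ℂ)*((x l : ℝ):ℂ)) := by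
    intro x
    rw [Complex.exp_sum]
    exact Finset.prod_congr rfl fun l _ => by rw [hcoord]
  rw [show (fun x : Fin d → ℝ => Complex.exp (∑ l, 2*(π:ℂ)*Complex.I*(n l : ℂ)*((((MeasurableEquiv.toLp 2 (Fin d → ℝ)) x) l : ℝ):ℂ)))
      = fun x : Fin d → ℝ => ∏ l, Complex.exp (2*(π:ℂ)*Complex.I*(n l : ℂ)*((x l : ℝ):ℂ)) from funext hfun]
  rw [← integral_indicator (MeasurableSet.univ_pi fun _ => measurableSet_Icc)]
  rw [indicator_pi_prod (fun _ => Set.Icc (-1:ℝ) 1)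
    (fun l (t : ℝ) => Complex.exp (2*(π:ℂ)*Complex.I*(n l : ℂ)*(t:ℂ)))]
  rw [integral_fintype_prod_volume_eq_prod
    (fun l (t : ℝ) => (Set.Icc (-1:ℝ) 1).indicator (fun t : ℝ => Complex.exp (2*(π:ℂ)*Complex.I*(n l : ℂ)*(t:ℂ))) t)]
  exact Finset.prod_congr rfl fun l _ => oneD (n l)

lemma measurableSet_cube : MeasurableSet (Cube d) := isClosed_cube.measurableSet


lemma iterate_formula (Ψ : E' d → ℂ) (hΨ : ContDiff ℝ (⊤ : ℕ∞) Ψ) (m : Fin d) {a : ℝ}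
    (ha0 : 0 < a) (ha1 : a ≤ 1) (J : Finset (Fin d → ℤ))
    (hJ : ∀ j ∈ J, |((j m : ℤ) : ℝ)| * a ≤ 1) (α' : (Fin d → ℤ) → ℂ) (q : ℕ) :
    ∃ β : (Fin d → ℤ) → ℕ → ℂ,
      (∀ j ∈ J, ∀ k, ‖β j k‖ ≤ (2*π+1)^q) ∧
      (∀ j k, q < k → β j k = 0) ∧
      (pderiv' m)^[q] (fun x => ∑ j ∈ J, α' j * GG Ψ m a j 0 x)
        = fun x => ∑ j ∈ J, α' j * ∑ k ∈ Finset.range (q+1), β j k * GG Ψ m a j k x := by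
  induction q with
  | zero =>
      refine ⟨fun j k => if k = 0 then 1 else 0, ?_, ?_, ?_⟩
      · intro j _ k; dsimp only; split <;> simp
      · intro j k hk; simp [Nat.pos_iff_ne_zero.mp hk]
      · simp
  | succ q ih =>
      obtain ⟨β, hβb, hβ0, hform⟩ := ih
      refine ⟨fun j k => (2*(π:ℂ)*Complex.I*(j m : ℂ)*(a:ℂ)) * β j k
          + (a:ℂ) * (if k = 0 then 0 else β j (k-1)), ?_, ?_, ?_⟩
      · intro j hj k
        have hc : ‖(2*(π:ℂ)*Complex.I*(j m : ℂ)*(a:ℂ))‖ ≤ 2*π := by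
          have : ‖(2*(π:ℂ)*Complex.I*(j m : ℂ)*(a:ℂ))‖ = 2*π*(|((j m : ℤ):ℝ)| * |a|) := by
            simp [norm_mul, Complex.norm_real, abs_of_nonneg pi_nonneg]
            ring
          rw [this, abs_of_pos ha0]
          calc 2*π*(|((j m : ℤ):ℝ)| * a) ≤ 2*π*1 := by
                have := hJ j hj
                have h2π : (0:ℝ) ≤ 2*π := by positivity
                nlinarith
            _ = 2*π := by ring
        have hb2 : ‖(if k = 0 then (0:ℂ) else β j (k-1))‖ ≤ (2*π+1)^q := by
          split
          · simp; positivity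
          · exact hβb j hj _
        have h1 : ‖((a:ℝ):ℂ)‖ ≤ 1 := by
          rw [Complex.norm_real, Real.norm_eq_abs, abs_of_pos ha0]; exact ha1
        calc ‖(2*(π:ℂ)*Complex.I*(j m : ℂ)*(a:ℂ)) * β j k
              + (a:ℂ) * (if k = 0 then (0:ℂ) else β j (k-1))‖
            ≤ ‖(2*(π:ℂ)*Complex.I*(j m : ℂ)*(a:ℂ)) * β j k‖
              + ‖(a:ℂ) * (if k = 0 then (0:ℂ) else β j (k-1))‖ := norm_add_le _ _
          _ ≤ (2*π) * (2*π+1)^q + 1 * (2*π+1)^q :=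
              add_le_add
                ((norm_mul_le _ _).trans
                  (mul_le_mul hc (hβb j hj k) (norm_nonneg _) (by positivity)))
                ((norm_mul_le _ _).trans
                  (mul_le_mul h1 hb2 (norm_nonneg _) one_pos.le))
          _ = (2*π+1)^(q+1) := by ring
      · intro j k hk
        have h1 : β j k = 0 := hβ0 j k (by omega)
        have h2 : (if k = 0 then (0:ℂ) else β j (k-1)) = 0 := by
          split
          · rfl
          · exact hβ0 j (k-1) (by omega)
        dsimp only; rw [h1, h2]; ring
      · rw [Function.iterate_succ_apply', hform]
        funext x
        have hsum : HasFDerivAt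
            (fun x => ∑ j ∈ J, α' j * ∑ k ∈ Finset.range (q+1), β j k * GG Ψ m a j k x)
            (∑ j ∈ J, α' j • ∑ k ∈ Finset.range (q+1), β j k • DGG Ψ m a j k x) x := by
          refine HasFDerivAt.fun_sum fun j _ => ?_
          refine HasFDerivAt.const_mul ?_ _
          exact HasFDerivAt.fun_sum fun k _ => (hasFDerivAt_GG Ψ hΨ m a j k x).const_mul _
        rw [pderiv', hsum.fderiv]
        simp only [ContinuousLinearMap.coe_sum', Finset.sum_apply, ContinuousLinearMap.coe_smul',
          Pi.smul_apply, smul_eq_mul]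
        refine Finset.sum_congr rfl fun j _ => ?_
        congr 1
        simp only [DGG_single Ψ hΨ m a]
        calc ∑ k ∈ Finset.range (q+1), β j k *
                ((2*(π:ℂ)*Complex.I*(j m : ℂ)*(a:ℂ)) * GG Ψ m a j k x
                  + (a:ℂ) * GG Ψ m a j (k+1) x)
            = ∑ k ∈ Finset.range (q+1),
                (((2*(π:ℂ)*Complex.I*(j m : ℂ)*(a:ℂ)) * β j k) * GG Ψ m a j k x
                  + ((a:ℂ) * β j k) * GG Ψ m a j (k+1) x) :=
              Finset.sum_congr rfl fun k _ => by ring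
          _ = (∑ k ∈ Finset.range (q+1),
                ((2*(π:ℂ)*Complex.I*(j m : ℂ)*(a:ℂ)) * β j k) * GG Ψ m a j k x)
              + ∑ k ∈ Finset.range (q+1), ((a:ℂ) * β j k) * GG Ψ m a j (k+1) x :=
              Finset.sum_add_distrib
          _ = (∑ k ∈ Finset.range (q+2),
                ((2*(π:ℂ)*Complex.I*(j m : ℂ)*(a:ℂ)) * β j k) * GG Ψ m a j k x)
              + ∑ k ∈ Finset.range (q+2),
                  (if k = 0 then (0:ℂ) else (a:ℂ) * β j (k-1)) * GG Ψ m a j k x := by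
              congr 1
              · conv_rhs => rw [Finset.sum_range_succ]
                rw [hβ0 j (q+1) (by omega)]
                simp
              · conv_rhs => rw [Finset.sum_range_succ']
                simp
          _ = ∑ k ∈ Finset.range (q+2),
                ((2*(π:ℂ)*Complex.I*(j m : ℂ)*(a:ℂ)) * β j k
                  + (a:ℂ) * (if k = 0 then (0:ℂ) else β j (k-1))) * GG Ψ m a j k x := by
              rw [← Finset.sum_add_distrib]
              exact Finset.sum_congr rfl fun k _ => by split <;> ring

lemma parseval (J : Finset (Fin d → ℤ)) (γ : (Fin d → ℤ) → ℂ) :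
    ∫⁻ y in Cube d, ((‖∑ j ∈ J, γ j * Complex.exp (phiC j y)‖₊ : ℝ≥0∞))^2
      = ENNReal.ofReal ((2:ℝ)^d) * ∑ j ∈ J, ((‖γ j‖₊ : ℝ≥0∞))^2 := by
  set Q : E' d → ℂ := fun y => ∑ j ∈ J, γ j * Complex.exp (phiC j y) with hQdef
  have hQc : Continuous Q := by
    refine continuous_finset_sum _ fun j _ => continuous_const.mul ?_
    exact Complex.continuous_exp.comp (phiC j).continuous
  -- Step A
  have hint : IntegrableOn (fun y => ‖Q y‖^2) (Cube d) :=
    ((hQc.norm.pow 2)).continuousOn.integrableOn_compact isCompact_cube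
  have hA : ∫⁻ y in Cube d, ((‖Q y‖₊ : ℝ≥0∞))^2
      = ENNReal.ofReal (∫ y in Cube d, ‖Q y‖^2) := by
    calc ∫⁻ y in Cube d, ((‖Q y‖₊ : ℝ≥0∞))^2
        = ∫⁻ y in Cube d, ENNReal.ofReal (‖Q y‖^2) := by
          refine lintegral_congr fun y => ?_
          rw [← enorm_eq_nnnorm, ← ofReal_norm, ← ENNReal.ofReal_pow (norm_nonneg _)]
      _ = ENNReal.ofReal (∫ y in Cube d, ‖Q y‖^2) :=
          (ofReal_integral_eq_lintegral_ofReal hint (ae_of_all _ fun y => sq_nonneg _)).symm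
  -- Step B
  have hintc : IntegrableOn (fun y => Q y * conj (Q y)) (Cube d) :=
    (hQc.mul hQc.star).continuousOn.integrableOn_compact isCompact_cube
  have hB : ∫ y in Cube d, ‖Q y‖^2 = (∫ y in Cube d, Q y * conj (Q y)).re := by
    refine Eq.trans ?_ (integral_re hintc)
    refine integral_congr_ae (ae_of_all _ fun y => ?_)
    show ‖Q y‖ ^ 2 = (Q y * conj (Q y)).re
    rw [Complex.mul_conj, Complex.ofReal_re, Complex.normSq_eq_norm_sq]
  -- Step C : expand and orthogonality
  have hterm : ∀ (j j' : Fin d → ℤ) (y : E' d),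
      (γ j * Complex.exp (phiC j y)) * conj (γ j' * Complex.exp (phiC j' y))
        = (γ j * conj (γ j')) *
            Complex.exp (∑ l, 2*(π:ℂ)*Complex.I*(((j l - j' l : ℤ)) : ℂ)*((y l : ℝ):ℂ)) := by
    intro j j' y
    have hconj : conj (Complex.exp (phiC j' y))
        = Complex.exp (∑ l, 2*(π:ℂ)*Complex.I*(((-(j' l) : ℤ)) : ℂ)*((y l : ℝ):ℂ)) := by
      rw [← Complex.exp_conj, phiC_apply, map_sum]
      congr 1
      refine Finset.sum_congr rfl fun l _ => ?_
      simp only [map_mul, Complex.conj_I, Complex.conj_ofReal, map_ofNat, map_intCast]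
      push_cast
      ring
    rw [map_mul, hconj]
    have : Complex.exp (∑ l, 2*(π:ℂ)*Complex.I*(j l : ℂ)*((y l : ℝ):ℂ)) *
        Complex.exp (∑ l, 2*(π:ℂ)*Complex.I*(((-(j' l) : ℤ)) : ℂ)*((y l : ℝ):ℂ))
        = Complex.exp (∑ l, 2*(π:ℂ)*Complex.I*(((j l - j' l : ℤ)) : ℂ)*((y l : ℝ):ℂ)) := by
      rw [← Complex.exp_add, ← Finset.sum_add_distrib]
      congr 1
      refine Finset.sum_congr rfl fun l _ => ?_
      push_cast
      ring
    calc (γ j * Complex.exp (phiC j y)) * (conj (γ j') * Complex.exp (∑ l, 2*(π:ℂ)*Complex.I*(((-(j' l) : ℤ)) : ℂ)*((y l : ℝ):ℂ)))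
        = (γ j * conj (γ j')) * (Complex.exp (phiC j y) * Complex.exp (∑ l, 2*(π:ℂ)*Complex.I*(((-(j' l) : ℤ)) : ℂ)*((y l : ℝ):ℂ))) := by ring
      _ = _ := by rw [phiC_apply, this]
  have hC : ∫ y in Cube d, Q y * conj (Q y)
      = ∑ j ∈ J, (γ j * conj (γ j)) * ((2:ℂ)^d) := by
    have hexpand : ∀ y, Q y * conj (Q y)
        = ∑ j ∈ J, ∑ j' ∈ J, (γ j * conj (γ j')) *
            Complex.exp (∑ l, 2*(π:ℂ)*Complex.I*(((j l - j' l : ℤ)) : ℂ)*((y l : ℝ):ℂ)) := by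
      intro y
      rw [hQdef]
      simp only [map_sum]
      rw [Finset.sum_mul_sum]
      exact Finset.sum_congr rfl fun j _ => Finset.sum_congr rfl fun j' _ => hterm j j' y
    calc ∫ y in Cube d, Q y * conj (Q y)
        = ∫ y in Cube d, ∑ j ∈ J, ∑ j' ∈ J, (γ j * conj (γ j')) *
            Complex.exp (∑ l, 2*(π:ℂ)*Complex.I*(((j l - j' l : ℤ)) : ℂ)*((y l : ℝ):ℂ)) :=
          integral_congr_ae (ae_of_all _ fun y => hexpand y)
      _ = ∑ j ∈ J, ∑ j' ∈ J, (γ j * conj (γ j')) *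
            ∫ y in Cube d, Complex.exp (∑ l, 2*(π:ℂ)*Complex.I*(((j l - j' l : ℤ)) : ℂ)*((y l : ℝ):ℂ)) := by
          rw [integral_finset_sum]
          · refine Finset.sum_congr rfl fun j _ => ?_
            rw [integral_finset_sum]
            · exact Finset.sum_congr rfl fun j' _ => integral_const_mul _ _
            · intro j' _
              refine (continuous_const.mul ?_).continuousOn.integrableOn_compact isCompact_cube
              refine Complex.continuous_exp.comp (continuous_finset_sum _ fun l _ => ?_)
              exact continuous_const.mul (Complex.continuous_ofReal.comp
                (EuclideanSpace.proj (𝕜 := ℝ) l).continuous)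
          · intro j _
            refine (continuous_finset_sum _ fun j' _ => continuous_const.mul ?_).continuousOn.integrableOn_compact isCompact_cube
            refine Complex.continuous_exp.comp (continuous_finset_sum _ fun l _ => ?_)
            exact continuous_const.mul (Complex.continuous_ofReal.comp
              (EuclideanSpace.proj (𝕜 := ℝ) l).continuous)
      _ = ∑ j ∈ J, ∑ j' ∈ J, (γ j * conj (γ j')) * (if j = j' then (2:ℂ)^d else 0) := by
          refine Finset.sum_congr rfl fun j _ => Finset.sum_congr rfl fun j' _ => ?_
          rw [cubeIntegral (fun l => j l - j' l)]
          congr 1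
          by_cases h : j = j'
          · subst h
            simp [Finset.prod_const, Finset.card_univ]
          · rw [if_neg h]
            obtain ⟨l, hl⟩ := Function.ne_iff.mp h
            exact Finset.prod_eq_zero (Finset.mem_univ l) (if_neg (sub_ne_zero.mpr hl))
      _ = ∑ j ∈ J, (γ j * conj (γ j)) * ((2:ℂ)^d) := by
          refine Finset.sum_congr rfl fun j hj => ?_
          have : ∀ j' : Fin d → ℤ, (γ j * conj (γ j')) * (if j = j' then (2:ℂ)^d else 0)
              = if j = j' then (γ j * conj (γ j')) * (2:ℂ)^d else 0 := by
            intro j'; split <;> simp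
          simp only [this]
          rw [Finset.sum_ite_eq J j (fun j' => (γ j * conj (γ j')) * (2:ℂ)^d), if_pos hj]
  -- Step D : real part
  have hD : (∑ j ∈ J, (γ j * conj (γ j)) * ((2:ℂ)^d)).re
      = ∑ j ∈ J, ‖γ j‖^2 * (2:ℝ)^d := by
    rw [Complex.re_sum]
    refine Finset.sum_congr rfl fun j _ => ?_
    rw [Complex.mul_conj]
    have : ((Complex.normSq (γ j) : ℝ) : ℂ) * ((2:ℂ)^d)
        = (((Complex.normSq (γ j) * (2:ℝ)^d : ℝ)) : ℂ) := by push_cast; ring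
    rw [this, Complex.ofReal_re, Complex.normSq_eq_norm_sq]
  -- Step E : back to ENNReal
  rw [hA, hB, hC, hD]
  rw [ENNReal.ofReal_sum_of_nonneg (fun j _ => by positivity)]
  rw [Finset.mul_sum]
  refine Finset.sum_congr rfl fun j _ => ?_
  rw [ENNReal.ofReal_mul' (by positivity), mul_comm]
  congr 1
  rw [← enorm_eq_nnnorm, ← ofReal_norm, ← ENNReal.ofReal_pow (norm_nonneg _)]

lemma sq_sum_le {ι : Type*} (t : Finset ι) (c : ι → ℝ≥0∞) :
    (∑ i ∈ t, c i)^2 ≤ 2 * t.card * ∑ i ∈ t, (c i)^2 := by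
  have h : (∑ i ∈ t, c i)^2 = ∑ i ∈ t, ∑ j ∈ t, c i * c j := by
    rw [sq, Finset.sum_mul_sum]
  rw [h]
  calc ∑ i ∈ t, ∑ j ∈ t, c i * c j ≤ ∑ i ∈ t, ∑ j ∈ t, ((c i)^2 + (c j)^2) := by
        refine Finset.sum_le_sum fun i _ => Finset.sum_le_sum fun j _ => ?_
        rcases le_total (c i) (c j) with hle | hle
        · calc c i * c j ≤ c j * c j := mul_le_mul_left hle _
            _ = (c j)^2 := (sq _).symm
            _ ≤ _ := le_add_self
        · calc c i * c j ≤ c i * c j := le_rfl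
            _ ≤ c i * c i := mul_le_mul_right hle _
            _ = (c i)^2 := (sq _).symm
            _ ≤ _ := self_le_add_right _ _
    _ = 2 * t.card * ∑ i ∈ t, (c i)^2 := by
        simp only [Finset.sum_add_distrib, Finset.sum_const, nsmul_eq_mul]
        rw [← Finset.mul_sum]
        ring

lemma scale_lintegral {a : ℝ} (ha0 : 0 < a) (F : E' d → ℝ≥0∞) (hF : Measurable F) :
    ∫⁻ x, F (a • x) = ENNReal.ofReal ((a ^ d)⁻¹) * ∫⁻ y, F y := by
  have h := MeasureTheory.Measure.map_addHaar_smul (μ := (volume : Measure (E' d))) (ne_of_gt ha0)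
  rw [← lintegral_map hF (by fun_prop), h]
  simp only [lintegral_smul_measure, finrank_euclideanSpace_fin]
  congr 2
  rw [abs_of_pos (by positivity)]

lemma key (d : ℕ) (Ψ : E' d → ℂ) (hΨsmooth : ContDiff ℝ (⊤ : ℕ∞) Ψ)
    (hΨsupp : Function.support Ψ ⊆ Cube d) (q : ℕ) (m : Fin d) :
    ∃ A : ℝ, 0 < A ∧ ∀ (s : ℕ), 1 ≤ s → ∀ α : (Fin d → ℤ) → ℂ,
      (∫⁻ x, (‖(pderiv' m)^[q]
          (fun y => ∑ j ∈ Fintype.piFinset (fun _ : Fin d => Finset.Icc (-(2 ^ s : ℤ)) (2 ^ s)),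
            α j * PsiJS Ψ j s y) x‖₊ : ℝ≥0∞) ^ 2) ≤
        ENNReal.ofReal A *
          ∑ j ∈ Fintype.piFinset (fun _ : Fin d => Finset.Icc (-(2 ^ s : ℤ)) (2 ^ s)),
            (‖α j‖₊ : ℝ≥0∞) ^ 2 := by
  -- uniform bound M on the derivatives of Ψ up to order q
  have hDkbound : ∀ k : ℕ, ∃ B : ℝ, ∀ y, ‖((pderiv' m)^[k] Ψ) y‖ ≤ B := by
    intro k
    obtain ⟨B, hB⟩ := (isCompact_cube (d := d)).exists_bound_of_continuousOn
      ((contDiff_iter m k hΨsmooth).continuous.continuousOn)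
    refine ⟨max B 0, fun y => ?_⟩
    by_cases hy : y ∈ Cube d
    · exact (hB y hy).trans (le_max_left _ _)
    · have h0 : ((pderiv' m)^[k] Ψ) y = 0 := by
        by_contra h
        exact hy (tsupport_iter_subset m k hΨsupp (Function.mem_support.mpr h))
      simp [h0]
  choose B hB using hDkbound
  set M : ℝ := 1 + ∑ k ∈ Finset.range (q+1), |B k| with hM_def
  have hM1 : (1:ℝ) ≤ M := le_add_of_nonneg_right (Finset.sum_nonneg fun k _ => abs_nonneg _)
  have hM0 : (0:ℝ) < M := lt_of_lt_of_le one_pos hM1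
  have hM : ∀ k ∈ Finset.range (q+1), ∀ y, ‖((pderiv' m)^[k] Ψ) y‖ ≤ M := by
    intro k hk y
    refine (hB k y).trans ?_
    calc B k ≤ |B k| := le_abs_self _
      _ ≤ ∑ k ∈ Finset.range (q+1), |B k| :=
          Finset.single_le_sum (f := fun k => |B k|) (fun k _ => abs_nonneg _) hk
      _ ≤ M := by rw [hM_def]; linarith
  set C : ℝ := (2*π+1)^q with hC_def
  have hC0 : (0:ℝ) < C := by positivity
  set K : ℝ := M^2 * 2^d * C^2 with hK_def
  have hK0 : (0:ℝ) < K := by positivity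
  refine ⟨2*(q+1)^2 * K + 1, by positivity, ?_⟩
  intro s hs α
  set a : ℝ := (2:ℝ)^(-(s:ℝ)) with ha_def
  have ha0 : 0 < a := Real.rpow_pos_of_pos two_pos _
  have ha1 : a ≤ 1 :=
    Real.rpow_le_one_of_one_le_of_nonpos one_le_two (neg_nonpos.mpr (Nat.cast_nonneg s))
  set w : ℝ := (2:ℝ)^(-((d:ℝ)*(s:ℝ))/2) with hw_def
  have hw0 : 0 < w := Real.rpow_pos_of_pos two_pos _
  have hwa : w^2 = a^d := by
    have h1 : w ^ 2 = (2:ℝ) ^ (-((d:ℝ)*(s:ℝ))) := by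
      rw [hw_def, ← Real.rpow_natCast ((2:ℝ) ^ (-((d:ℝ)*(s:ℝ))/2)) 2,
        ← Real.rpow_mul (by norm_num : (0:ℝ) ≤ 2)]
      norm_num
    have h2 : a ^ d = (2:ℝ) ^ (-((d:ℝ)*(s:ℝ))) := by
      rw [ha_def, ← Real.rpow_natCast ((2:ℝ) ^ (-(s:ℝ))) d,
        ← Real.rpow_mul (by norm_num : (0:ℝ) ≤ 2)]
      ring_nf
    rw [h1, h2]
  have had0 : (0:ℝ) < a ^ d := by positivity
  set J := Fintype.piFinset (fun _ : Fin d => Finset.Icc (-(2 ^ s : ℤ)) (2 ^ s)) with hJ_def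
  have hJm : ∀ j ∈ J, |((j m : ℤ):ℝ)| * a ≤ 1 := by
    intro j hj
    have hmem := (Fintype.mem_piFinset.mp hj) m
    rw [Finset.mem_Icc] at hmem
    have h1 : |((j m : ℤ):ℝ)| ≤ (2:ℝ)^(s:ℕ) := by
      rw [abs_le]
      constructor
      · exact_mod_cast hmem.1
      · exact_mod_cast hmem.2
    have h2 : (2:ℝ)^(s:ℕ) * a = 1 := by
      rw [ha_def, ← Real.rpow_natCast (2:ℝ) s, ← Real.rpow_add two_pos]
      simp
    calc |((j m : ℤ):ℝ)| * a ≤ (2:ℝ)^(s:ℕ) * a := mul_le_mul_of_nonneg_right h1 ha0.le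
      _ = 1 := h2
  -- rewrite the sum in terms of GG
  have hR : (fun y => ∑ j ∈ J, α j * PsiJS Ψ j s y)
      = fun x => ∑ j ∈ J, (α j * (w:ℂ)) * GG Ψ m a j 0 x := by
    funext x
    refine Finset.sum_congr rfl fun j _ => ?_
    have hexp : Complex.exp (2 * (π:ℂ) * Complex.I *
        ∑ l, (j l : ℂ) * (((2:ℝ)^(-(s:ℝ)) * x l : ℝ) : ℂ))
        = Complex.exp (phiC j (a • x)) := by
      rw [phiC_apply]
      congr 1
      rw [Finset.mul_sum]
      refine Finset.sum_congr rfl fun l _ => ?_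
      have hsm : (a • x) l = a * x l := by simp
      rw [hsm, ha_def]
      push_cast
      ring
    simp only [PsiJS, GG, Function.iterate_zero, id_eq]
    rw [← ha_def, ← hw_def, hexp]
    ring
  obtain ⟨β, hβb, hβ0, hform⟩ :=
    iterate_formula Ψ hΨsmooth m ha0 ha1 J hJm (fun j => α j * (w:ℂ)) q
  have hpoint : ∀ x, ((pderiv' m)^[q] (fun y => ∑ j ∈ J, α j * PsiJS Ψ j s y)) x
      = ∑ k ∈ Finset.range (q+1),
          (∑ j ∈ J, (α j * (w:ℂ) * β j k) * Complex.exp (phiC j (a • x))) *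
            ((pderiv' m)^[k] Ψ) (a • x) := by
    intro x
    rw [hR, hform]
    calc ∑ j ∈ J, (α j * (w:ℂ)) * ∑ k ∈ Finset.range (q+1), β j k * GG Ψ m a j k x
        = ∑ j ∈ J, ∑ k ∈ Finset.range (q+1), (α j * (w:ℂ) * β j k) * GG Ψ m a j k x := by
          refine Finset.sum_congr rfl fun j _ => ?_
          rw [Finset.mul_sum]
          exact Finset.sum_congr rfl fun k _ => by ring
      _ = ∑ k ∈ Finset.range (q+1), ∑ j ∈ J, (α j * (w:ℂ) * β j k) * GG Ψ m a j k x :=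
          Finset.sum_comm
      _ = ∑ k ∈ Finset.range (q+1),
            (∑ j ∈ J, (α j * (w:ℂ) * β j k) * Complex.exp (phiC j (a • x))) *
              ((pderiv' m)^[k] Ψ) (a • x) := by
          refine Finset.sum_congr rfl fun k _ => ?_
          rw [Finset.sum_mul]
          refine Finset.sum_congr rfl fun j _ => ?_
          simp only [GG]
          ring
  set S := ∑ j ∈ J, ((‖α j‖₊ : ℝ≥0∞))^2 with hS_def
  -- continuity facts
  have hQcont : ∀ k, Continuous fun y : E' d =>
      (∑ j ∈ J, (α j * (w:ℂ) * β j k) * Complex.exp (phiC j y)) * ((pderiv' m)^[k] Ψ) y := by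
    intro k
    refine Continuous.mul ?_ ((contDiff_iter m k hΨsmooth).continuous)
    exact continuous_finset_sum _ fun j _ =>
      continuous_const.mul (Complex.continuous_exp.comp (phiC j).continuous)
  have hQcont2 : ∀ k, Continuous fun x : E' d =>
      (∑ j ∈ J, (α j * (w:ℂ) * β j k) * Complex.exp (phiC j (a • x))) *
        ((pderiv' m)^[k] Ψ) (a • x) :=
    fun k => (hQcont k).comp (continuous_id.const_smul a)
  have hmeas2 : ∀ k, Measurable fun x : E' d =>
      ((‖(∑ j ∈ J, (α j * (w:ℂ) * β j k) * Complex.exp (phiC j (a • x))) *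
        ((pderiv' m)^[k] Ψ) (a • x)‖₊ : ℝ≥0∞))^2 :=
    fun k => (((hQcont2 k).nnnorm.measurable).coe_nnreal_ennreal).pow_const 2
  -- the per-k bound
  have hk_bound : ∀ k ∈ Finset.range (q+1),
      (∫⁻ x, ((‖(∑ j ∈ J, (α j * (w:ℂ) * β j k) * Complex.exp (phiC j (a • x))) *
        ((pderiv' m)^[k] Ψ) (a • x)‖₊ : ℝ≥0∞))^2)
      ≤ ENNReal.ofReal K * S := by
    intro k hk
    have hmeasF : Measurable fun y : E' d =>
        ((‖(∑ j ∈ J, (α j * (w:ℂ) * β j k) * Complex.exp (phiC j y)) *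
          ((pderiv' m)^[k] Ψ) y‖₊ : ℝ≥0∞))^2 :=
      (((hQcont k).nnnorm.measurable).coe_nnreal_ennreal).pow_const 2
    have hγ : ∑ j ∈ J, ((‖α j * (w:ℂ) * β j k‖₊ : ℝ≥0∞))^2
        ≤ ENNReal.ofReal ((w*C)^2) * S := by
      rw [hS_def, Finset.mul_sum]
      refine Finset.sum_le_sum fun j hj => ?_
      rw [← enorm_eq_nnnorm, ← ofReal_norm, ← ENNReal.ofReal_pow (norm_nonneg _),
        ← enorm_eq_nnnorm (α j), ← ofReal_norm (α j), ← ENNReal.ofReal_pow (norm_nonneg _),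
        ← ENNReal.ofReal_mul (by positivity)]
      refine ENNReal.ofReal_le_ofReal ?_
      have h1 : ‖α j * (w:ℂ) * β j k‖ ≤ ‖α j‖ * w * C := by
        rw [norm_mul, norm_mul]
        have hww : ‖((w:ℝ):ℂ)‖ = w := by
          rw [Complex.norm_real, Real.norm_eq_abs, abs_of_pos hw0]
        rw [hww]
        exact mul_le_mul_of_nonneg_left (hβb j hj k) (by positivity)
      calc ‖α j * (w:ℂ) * β j k‖^2 ≤ (‖α j‖ * w * C)^2 :=
            pow_le_pow_left₀ (norm_nonneg _) h1 2
        _ = (w*C)^2 * ‖α j‖^2 := by ring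
    have hbd : (∫⁻ y, ((‖(∑ j ∈ J, (α j * (w:ℂ) * β j k) * Complex.exp (phiC j y)) *
          ((pderiv' m)^[k] Ψ) y‖₊ : ℝ≥0∞))^2)
        ≤ ENNReal.ofReal (M^2) *
            ∫⁻ y in Cube d, ((‖∑ j ∈ J, (α j * (w:ℂ) * β j k) * Complex.exp (phiC j y)‖₊ : ℝ≥0∞))^2 := by
      calc (∫⁻ y, ((‖(∑ j ∈ J, (α j * (w:ℂ) * β j k) * Complex.exp (phiC j y)) *
            ((pderiv' m)^[k] Ψ) y‖₊ : ℝ≥0∞))^2)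
          ≤ ∫⁻ y, (Cube d).indicator (fun y => ENNReal.ofReal (M^2) *
              ((‖∑ j ∈ J, (α j * (w:ℂ) * β j k) * Complex.exp (phiC j y)‖₊ : ℝ≥0∞))^2) y := by
            refine lintegral_mono fun y => ?_
            by_cases hy : y ∈ Cube d
            · rw [Set.indicator_of_mem hy]
              rw [nnnorm_mul, ENNReal.coe_mul, mul_pow]
              have hD2 : ((‖((pderiv' m)^[k] Ψ) y‖₊ : ℝ≥0∞))^2 ≤ ENNReal.ofReal (M^2) := by
                rw [← enorm_eq_nnnorm, ← ofReal_norm, ← ENNReal.ofReal_pow (norm_nonneg _)]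
                refine ENNReal.ofReal_le_ofReal ?_
                have := hM k hk y
                nlinarith [norm_nonneg (((pderiv' m)^[k] Ψ) y)]
              calc ((‖∑ j ∈ J, (α j * (w:ℂ) * β j k) * Complex.exp (phiC j y)‖₊ : ℝ≥0∞))^2 *
                    ((‖((pderiv' m)^[k] Ψ) y‖₊ : ℝ≥0∞))^2
                  ≤ ((‖∑ j ∈ J, (α j * (w:ℂ) * β j k) * Complex.exp (phiC j y)‖₊ : ℝ≥0∞))^2 *
                    ENNReal.ofReal (M^2) := mul_le_mul_right hD2 _
                _ = _ := mul_comm _ _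
            · rw [Set.indicator_of_notMem hy]
              have hD0 : ((pderiv' m)^[k] Ψ) y = 0 := by
                by_contra h
                exact hy (tsupport_iter_subset m k hΨsupp (Function.mem_support.mpr h))
              simp [hD0]
        _ = ENNReal.ofReal (M^2) *
              ∫⁻ y in Cube d, ((‖∑ j ∈ J, (α j * (w:ℂ) * β j k) * Complex.exp (phiC j y)‖₊ : ℝ≥0∞))^2 := by
            rw [lintegral_indicator measurableSet_cube]
            exact lintegral_const_mul' _ _ ENNReal.ofReal_ne_top
    calc (∫⁻ x, ((‖(∑ j ∈ J, (α j * (w:ℂ) * β j k) * Complex.exp (phiC j (a • x))) *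
          ((pderiv' m)^[k] Ψ) (a • x)‖₊ : ℝ≥0∞))^2)
        = ENNReal.ofReal ((a^d)⁻¹) *
            ∫⁻ y, ((‖(∑ j ∈ J, (α j * (w:ℂ) * β j k) * Complex.exp (phiC j y)) *
              ((pderiv' m)^[k] Ψ) y‖₊ : ℝ≥0∞))^2 := scale_lintegral ha0 _ hmeasF
      _ ≤ ENNReal.ofReal ((a^d)⁻¹) * (ENNReal.ofReal (M^2) *
            (ENNReal.ofReal ((2:ℝ)^d) * (ENNReal.ofReal ((w*C)^2) * S))) := by
          refine mul_le_mul_right ?_ _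
          refine hbd.trans ?_
          rw [parseval J (fun j => α j * (w:ℂ) * β j k)]
          exact mul_le_mul_right (mul_le_mul_right hγ _) _
      _ = ENNReal.ofReal K * S := by
          rw [← mul_assoc, ← mul_assoc, ← mul_assoc,
            ← ENNReal.ofReal_mul (by positivity), ← ENNReal.ofReal_mul (by positivity),
            ← ENNReal.ofReal_mul (by positivity)]
          congr 2
          rw [hK_def]
          have hwC : (w*C)^2 = a^d * C^2 := by rw [mul_pow, hwa]
          field_simp [hwC]
          ring
          exact hwa
  -- assemble
  calc (∫⁻ x, (‖(pderiv' m)^[q] (fun y => ∑ j ∈ J, α j * PsiJS Ψ j s y) x‖₊ : ℝ≥0∞) ^ 2)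
      = ∫⁻ x, ((‖∑ k ∈ Finset.range (q+1),
          (∑ j ∈ J, (α j * (w:ℂ) * β j k) * Complex.exp (phiC j (a • x))) *
            ((pderiv' m)^[k] Ψ) (a • x)‖₊ : ℝ≥0∞))^2 :=
        lintegral_congr fun x => by rw [hpoint x]
    _ ≤ ∫⁻ x, ((2*(q+1) : ℕ) : ℝ≥0∞) * ∑ k ∈ Finset.range (q+1),
          ((‖(∑ j ∈ J, (α j * (w:ℂ) * β j k) * Complex.exp (phiC j (a • x))) *
            ((pderiv' m)^[k] Ψ) (a • x)‖₊ : ℝ≥0∞))^2 := by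
        refine lintegral_mono fun x => ?_
        calc ((‖∑ k ∈ Finset.range (q+1),
              (∑ j ∈ J, (α j * (w:ℂ) * β j k) * Complex.exp (phiC j (a • x))) *
                ((pderiv' m)^[k] Ψ) (a • x)‖₊ : ℝ≥0∞))^2
            ≤ (∑ k ∈ Finset.range (q+1),
                ((‖(∑ j ∈ J, (α j * (w:ℂ) * β j k) * Complex.exp (phiC j (a • x))) *
                  ((pderiv' m)^[k] Ψ) (a • x)‖₊ : ℝ≥0∞)))^2 := by
              refine pow_le_pow_left' ?_ 2
              rw [← ENNReal.coe_finset_sum]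
              exact_mod_cast nnnorm_sum_le _ _
          _ ≤ 2 * (Finset.range (q+1)).card * ∑ k ∈ Finset.range (q+1),
                ((‖(∑ j ∈ J, (α j * (w:ℂ) * β j k) * Complex.exp (phiC j (a • x))) *
                  ((pderiv' m)^[k] Ψ) (a • x)‖₊ : ℝ≥0∞))^2 := sq_sum_le _ _
          _ = ((2*(q+1) : ℕ) : ℝ≥0∞) * ∑ k ∈ Finset.range (q+1),
                ((‖(∑ j ∈ J, (α j * (w:ℂ) * β j k) * Complex.exp (phiC j (a • x))) *
                  ((pderiv' m)^[k] Ψ) (a • x)‖₊ : ℝ≥0∞))^2 := by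
              rw [Finset.card_range]
              push_cast
              ring
    _ = ((2*(q+1) : ℕ) : ℝ≥0∞) * ∑ k ∈ Finset.range (q+1),
          ∫⁻ x, ((‖(∑ j ∈ J, (α j * (w:ℂ) * β j k) * Complex.exp (phiC j (a • x))) *
            ((pderiv' m)^[k] Ψ) (a • x)‖₊ : ℝ≥0∞))^2 := by
        rw [lintegral_const_mul' _ _ (ENNReal.natCast_ne_top _)]
        congr 1
        exact lintegral_finset_sum' _ fun k _ => (hmeas2 k).aemeasurable
    _ ≤ ((2*(q+1) : ℕ) : ℝ≥0∞) * ∑ k ∈ Finset.range (q+1), (ENNReal.ofReal K * S) :=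
        mul_le_mul_right (Finset.sum_le_sum hk_bound) _
    _ ≤ ENNReal.ofReal (2*(q+1)^2 * K + 1) * S := by
        rw [Finset.sum_const, Finset.card_range, nsmul_eq_mul]
        rw [show ((2*(q+1) : ℕ) : ℝ≥0∞) = ENNReal.ofReal ((2*(q+1) : ℕ) : ℝ) from
          (ENNReal.ofReal_natCast _).symm]
        rw [show (((q+1) : ℕ) : ℝ≥0∞) = ENNReal.ofReal (((q+1) : ℕ) : ℝ) from
          (ENNReal.ofReal_natCast _).symm]
        rw [← mul_assoc, ← mul_assoc, ← ENNReal.ofReal_mul (by positivity),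
          ← ENNReal.ofReal_mul (by positivity)]
        refine mul_le_mul_left (ENNReal.ofReal_le_ofReal ?_) _
        push_cast
        nlinarith [hK0]


end Lemma5Aux

/-- Lemma 5: if `Ψ` is smooth with support in `[-1,1]^d` and `q ≥ 1`, there is `A = A(Ψ, q)`
such that for every `s ≥ 1`, all coefficients `(α_j)_{|j_l| ≤ 2^s}` and every `m`, the function
`R = Σ_j α_j Ψ_{j,s}` satisfies `‖∂_m^q R‖₂² ≤ A Σ_j |α_j|²`. -/
theorem pderiv_pow_sum_PsiJS_le
    (d : ℕ) (hd : 1 ≤ d) (Ψ : EuclideanSpace ℝ (Fin d) → ℂ)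
    (hΨsmooth : ContDiff ℝ (⊤ : ℕ∞) Ψ)
    (hΨsupp : Function.support Ψ ⊆ {x | ∀ i, |x i| ≤ 1})
    (q : ℕ) (hq : 1 ≤ q) :
    ∃ A : ℝ, 0 < A ∧
      ∀ (s : ℕ), 1 ≤ s →
      ∀ (α : (Fin d → ℤ) → ℂ) (m : Fin d),
        (∫⁻ x, (‖(pderiv' m)^[q]
            (fun y => ∑ j ∈ Fintype.piFinset (fun _ : Fin d => Finset.Icc (-(2 ^ s : ℤ)) (2 ^ s)),
              α j * PsiJS Ψ j s y) x‖₊ : ℝ≥0∞) ^ 2) ≤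
          ENNReal.ofReal A *
            ∑ j ∈ Fintype.piFinset (fun _ : Fin d => Finset.Icc (-(2 ^ s : ℤ)) (2 ^ s)),
              (‖α j‖₊ : ℝ≥0∞) ^ 2 := by
  have hsupp' : Function.support Ψ ⊆ Lemma5Aux.Cube d := hΨsupp
  have h := fun m : Fin d => Lemma5Aux.key d Ψ hΨsmooth hsupp' q m
  choose A hA0 hA using h
  have : Nonempty (Fin d) := ⟨⟨0, hd⟩⟩
  refine ⟨∑ m, A m, Finset.sum_pos (fun m _ => hA0 m) Finset.univ_nonempty, ?_⟩
  intro s hs α m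
  refine (hA m s hs α).trans (mul_le_mul_left (ENNReal.ofReal_le_ofReal ?_) _)
  exact Finset.single_le_sum (f := A) (fun i _ => (hA0 i).le) (Finset.mem_univ m)
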